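/- (Neyman–Pearson for anisotropic Laplace, part 1) Let x, μ, δ ∈ ℝ^d and λ₁,…,λ_d > 0. Let X be a random vector whose i-th coordinate is an independent Laplace random variable with location x_i + μ_i and scale λ_i, and Y a random vector whose i-th coordinate is an independent Laplace random variable with location x_i + μ_i + δ_i and scale λ_i. Let h : ℝ^d → {0,1} be any deterministic measurable function. If S = { z ∈ ℝ^d : Σ_{i=1}^d (1/λ_i)·(|z_i − (x_i+μ_i) − δ_i| − |z_i − (x_i+μ_i)|) ≥ β } for some β ∈ ℝ and P(h(X)=1) ≥ P(X ∈ S), then P(h(Y)=1) ≥ P(Y ∈ S). -/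

import Mathlib

/-!
The likelihood ratio `dμY/dμX` factorises over the coordinates and equals `exp (-F)`, where `F`
is the sum defining `S`; hence `S = {F ≥ β}` is exactly the region where the ratio is at most
`c = exp (-β)`. For `A = {h = 1}` the Neyman–Pearson comparison
`μY (S \ A) ≤ c · μX (S \ A) ≤ c · μX (A \ S) ≤ μY (A \ S)` then gives `μY S ≤ μY A`.
-/

open MeasureTheory ProbabilityTheory

/-- The Laplace measure on `ℝ` with location `m` and scale `l`, given by the density
`z ↦ (1/(2l)) · exp(−|z − m|/l)` with respect to Lebesgue measure. -/
noncomputable def laplaceReal (m l : ℝ) : Measure ℝ :=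
  volume.withDensity fun z => ENNReal.ofReal ((2 * l)⁻¹ * Real.exp (-|z - m| / l))

open Real Set
open scoped ENNReal

theorem neymanPearson_withDensity_apply_le {α : Type*} [MeasurableSpace α] {μ : Measure α}
    [IsFiniteMeasure μ] {w : α → ℝ≥0∞} {S A : Set α} (hS : MeasurableSet S)
    (hA : MeasurableSet A) {c : ℝ≥0∞} (hwS : ∀ z ∈ S, w z ≤ c) (hwSc : ∀ z ∉ S, c ≤ w z)
    (h : μ S ≤ μ A) :
    μ.withDensity w S ≤ μ.withDensity w A := by
  have hdiff : μ (S \ A) ≤ μ (A \ S) := by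
    refine (ENNReal.add_le_add_iff_left (measure_ne_top μ (S ∩ A))).1 ?_
    rwa [measure_inter_add_sdiff S hA, inter_comm, measure_inter_add_sdiff A hS]
  have hdiff' : μ.withDensity w (S \ A) ≤ μ.withDensity w (A \ S) := calc
    μ.withDensity w (S \ A) ≤ ∫⁻ _ in S \ A, c ∂μ := by
        rw [withDensity_apply _ (hS.diff hA)]
        exact setLIntegral_mono' (hS.diff hA) fun z hz => hwS z hz.1
    _ = c * μ (S \ A) := setLIntegral_const _ _
    _ ≤ c * μ (A \ S) := by gcongr
    _ = ∫⁻ _ in A \ S, c ∂μ := (setLIntegral_const _ _).symm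
    _ ≤ μ.withDensity w (A \ S) := by
        rw [withDensity_apply _ (hA.diff hS)]
        exact setLIntegral_mono' (hA.diff hS) fun z hz => hwSc z hz.2
  calc μ.withDensity w S = μ.withDensity w (S ∩ A) + μ.withDensity w (S \ A) :=
        (measure_inter_add_sdiff S hA).symm
    _ ≤ μ.withDensity w (A ∩ S) + μ.withDensity w (A \ S) := by rw [inter_comm]; gcongr
    _ = μ.withDensity w A := measure_inter_add_sdiff A hS

section Pi

variable {ι : Type*} [Fintype ι] {X : ι → Type*} [∀ i, MeasurableSpace (X i)]
  {μ : ∀ i, Measure (X i)} [∀ i, IsProbabilityMeasure (μ i)]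

lemma lintegral_pi_prod_eq_prod {g : ∀ i, X i → ℝ≥0∞} (hg : ∀ i, Measurable (g i)) :
    ∫⁻ z, ∏ i, g i (z i) ∂Measure.pi μ = ∏ i, ∫⁻ t, g i t ∂μ i := by
  rw [lintegral_prod_eq_prod_lintegral_of_indepFun _ _
    (iIndepFun_pi fun i => (hg i).aemeasurable) fun i => (hg i).comp (measurable_pi_apply i)]
  exact Finset.prod_congr rfl fun i _ => (measurePreserving_eval μ i).lintegral_comp (hg i)

lemma pi_eq_withDensity_prod {ν : ∀ i, Measure (X i)} [∀ i, SigmaFinite (ν i)]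
    {ρ : ∀ i, X i → ℝ≥0∞} (hρ : ∀ i, Measurable (ρ i))
    (hν : ∀ i, ν i = (μ i).withDensity (ρ i)) :
    Measure.pi ν = (Measure.pi μ).withDensity fun z => ∏ i, ρ i (z i) := by
  refine Measure.pi_eq fun s hs => ?_
  rw [withDensity_apply _ (.univ_pi hs), ← lintegral_indicator (.univ_pi hs)]
  simp_rw [hν, withDensity_apply _ (hs _), ← lintegral_indicator (hs _)]
  rw [← lintegral_pi_prod_eq_prod fun i => (hρ i).indicator (hs i)]
  refine lintegral_congr fun z => ?_
  classical
  simp only [indicator_apply, mem_pi, mem_univ, forall_const, Finset.prod_ite_zero,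
    Finset.mem_univ]

end Pi

lemma integral_exp_neg_abs_div {l : ℝ} (hl : 0 < l) : ∫ z, exp (-|z| / l) = 2 * l := by
  rw [integral_comp_abs (f := fun z => exp (-z / l))]
  have hIoi := integral_exp_mul_Ioi (a := -l⁻¹) (by simpa using hl) 0
  simp only [mul_zero, exp_zero] at hIoi
  simp_rw [neg_div, div_eq_inv_mul, ← neg_mul, hIoi]
  field_simp

lemma integral_laplace_density_eq_one {l : ℝ} (hl : 0 < l) (m : ℝ) :
    ∫ z, (2 * l)⁻¹ * exp (-|z - m| / l) = 1 := by
  rw [integral_const_mul, integral_sub_right_eq_self (fun z => exp (-|z| / l)),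
    integral_exp_neg_abs_div hl]
  field_simp

lemma isProbabilityMeasure_laplaceReal {l : ℝ} (hl : 0 < l) (m : ℝ) :
    IsProbabilityMeasure (laplaceReal m l) := by
  have hone := integral_laplace_density_eq_one hl m
  constructor
  rw [laplaceReal, withDensity_apply _ .univ, Measure.restrict_univ,
    ← ofReal_integral_eq_lintegral_ofReal (.of_integral_ne_zero (by rw [hone]; exact one_ne_zero))
      (ae_of_all _ fun z => by positivity), hone, ENNReal.ofReal_one]

lemma laplaceReal_add_eq_withDensity (m δ l : ℝ) :
    laplaceReal (m + δ) l = (laplaceReal m l).withDensity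
      fun t => ENNReal.ofReal (exp (-((1 / l) * (|t - m - δ| - |t - m|)))) := by
  rw [laplaceReal, laplaceReal, ← withDensity_mul _ (by fun_prop) (by fun_prop)]
  congr 1
  funext t
  rw [Pi.mul_apply, ← ENNReal.ofReal_mul' (exp_pos _).le, mul_assoc, ← exp_add,
    sub_add_eq_sub_sub]
  congr 3
  ring

/-- Neyman–Pearson for anisotropic Laplace noise, part 1. -/
theorem neyman_pearson_laplace_one
    {d : ℕ} (x μ δ : Fin d → ℝ) (lam : Fin d → ℝ) (hlam : ∀ i, 0 < lam i)
    (μX μY : Measure (Fin d → ℝ))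
    (hμX : μX = Measure.pi fun i : Fin d => laplaceReal (x i + μ i) (lam i))
    (hμY : μY = Measure.pi fun i : Fin d => laplaceReal (x i + μ i + δ i) (lam i))
    (h : (Fin d → ℝ) → Bool) (hh : Measurable h)
    (β : ℝ) (S : Set (Fin d → ℝ))
    (hS : S = {z | ∑ i, (1 / lam i) * (|z i - (x i + μ i) - δ i| - |z i - (x i + μ i)|) ≥ β})
    (hcond : μX {z | h z = true} ≥ μX S) :
    μY {z | h z = true} ≥ μY S := by
  have _ (i : Fin d) := isProbabilityMeasure_laplaceReal (hlam i) (x i + μ i)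
  have _ (i : Fin d) := isProbabilityMeasure_laplaceReal (hlam i) (x i + μ i + δ i)
  have _ : IsFiniteMeasure μX := hμX ▸ inferInstance
  set F : (Fin d → ℝ) → ℝ :=
    fun z => ∑ i, (1 / lam i) * (|z i - (x i + μ i) - δ i| - |z i - (x i + μ i)|)
  have hratio : μY = μX.withDensity fun z => ENNReal.ofReal (exp (-F z)) := by
    rw [hμY, hμX, pi_eq_withDensity_prod (fun i => by fun_prop)
      fun i => laplaceReal_add_eq_withDensity _ _ _]
    congr 1
    funext z
    rw [← ENNReal.ofReal_prod_of_nonneg fun i _ => (exp_pos _).le, ← exp_sum,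
      Finset.sum_neg_distrib]
  rw [hratio]
  refine neymanPearson_withDensity_apply_le (c := ENNReal.ofReal (exp (-β)))
    (hS ▸ measurableSet_le measurable_const (by fun_prop)) (hh (measurableSet_singleton true))
    (fun z hz => ?_) (fun z hz => ?_) hcond
  · rw [hS] at hz
    exact ENNReal.ofReal_le_ofReal (exp_le_exp.2 (neg_le_neg hz))
  · rw [hS, mem_ofPred_eq, not_le] at hz
    exact ENNReal.ofReal_le_ofReal (exp_le_exp.2 (neg_le_neg hz.le))
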